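/- With σ̃_p(x) = ε·x^d + σ_p(x), ε ≠ 0, and p̃ defined by p̃_i = 1 iff σ̃_p(α_i) = 0: I_p ∩ I_{p̃} = {i} for a single index i if and only if i ∈ I_p, α_i = 0, and d > 0. -/

import Mathlib

open Polynomial

/-!
On the support of `p` the product `σ_p` vanishes, so there `σ̃_p(α_j) = ε α_j ^ d`, which is zero
exactly when `α_j = 0` and `d > 0`. Since the `α_j` are distinct, at most one index has `α_j = 0`.
-/

theorem eval_C_mul_X_pow_add_eq_zero_iff {R : Type*} [CommSemiring R] [NoZeroDivisors R]
    {ε x : R} (hε : ε ≠ 0) {f : R[X]} (hf : f.eval x = 0) (d : ℕ) :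
    (C ε * X ^ d + f).eval x = 0 ↔ x = 0 ∧ 0 < d := by
  have := nontrivial_of_ne ε 0 hε
  simp [hf, hε, pow_eq_zero_iff', Nat.pos_iff_ne_zero]

theorem eval_prod_X_sub_C_of_mem {R ι : Type*} [CommRing R] {s : Finset ι} {j : ι} (hj : j ∈ s)
    (α : ι → R) : (∏ k ∈ s, (X - C (α k))).eval (α j) = 0 := by
  rw [eval_prod]
  exact Finset.prod_eq_zero hj (by simp)

theorem Finset.filter_eq_singleton_iff {ι : Type*} {s : Finset ι} {P : ι → Prop} [DecidablePred P]
    (hP : ∀ a b, P a → P b → a = b) {i : ι} : s.filter P = {i} ↔ i ∈ s ∧ P i := by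
  rw [Finset.eq_singleton_iff_unique_mem, Finset.mem_filter]
  refine ⟨And.left, fun hi => ⟨hi, fun j hj => hP j i (Finset.mem_filter.1 hj).2 hi.2⟩⟩

theorem fault_support_singleton_iff_general {n d : ℕ} {F : Type*} [Field F] [DecidableEq F]
    (α : Fin n → F) (hα : Function.Injective α)
    (p : Fin n → ZMod 2)
    (ε : F) (hε : ε ≠ 0) (i : Fin n) :
    ((Finset.univ.filter (fun i => p i = 1)) ∩
        (Finset.univ.filter (fun j =>
          (C ε * X ^ d + ∏ k ∈ Finset.univ.filter (fun i => p i = 1),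
            (X - C (α k))).eval (α j) = 0)) = {i})
      ↔ (i ∈ Finset.univ.filter (fun i => p i = 1) ∧ α i = 0 ∧ 0 < d) := by
  set I := Finset.univ.filter (fun i => p i = 1)
  have hinter : I ∩ Finset.univ.filter (fun j =>
      (C ε * X ^ d + ∏ k ∈ I, (X - C (α k))).eval (α j) = 0) =
      I.filter (fun j => α j = 0 ∧ 0 < d) := by
    ext j
    simp only [Finset.mem_inter, Finset.mem_filter, Finset.mem_univ, true_and]
    exact and_congr_right fun hj =>
      eval_C_mul_X_pow_add_eq_zero_iff hε (eval_prod_X_sub_C_of_mem hj α) d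
  rw [hinter]
  exact Finset.filter_eq_singleton_iff fun a b ha hb => hα (ha.1.trans hb.1.symm)

/-- With `ε ≠ 0`: `I_p ∩ I_{p̃} = {i}` iff `i ∈ I_p`, `α_i = 0` and `d > 0`. -/
theorem fault_support_singleton_iff {m n d : ℕ} {F : Type*} [Field F] [Fintype F] [DecidableEq F] [CharP F 2]
    (hcard : Fintype.card F = 2 ^ m)
    (α : Fin n → F) (hα : Function.Injective α)
    (p : Fin n → ZMod 2) (hp : (Finset.univ.filter (fun i => p i = 1)).Nonempty)
    (ε : F) (hε : ε ≠ 0) (i : Fin n) :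
    ((Finset.univ.filter (fun i => p i = 1)) ∩
        (Finset.univ.filter (fun j =>
          (C ε * X ^ d + ∏ k ∈ Finset.univ.filter (fun i => p i = 1),
            (X - C (α k))).eval (α j) = 0)) = {i})
      ↔ (i ∈ Finset.univ.filter (fun i => p i = 1) ∧ α i = 0 ∧ 0 < d) :=
  fault_support_singleton_iff_general α hα p ε hε i
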